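/- arXiv:2410.09617 — 2 statements merged into one kernel-verified Lean document; each statement's English description precedes it below -/
import Mathlib

section
/- Let k ≥ 2 be an integer, let h be a graph parameter and suppose the Turán-type function g = g_h is strongly k-ESS-stable. Then g is strongly k-ESS-stable with respect to every suitable partition (𝓐,𝓕) with abstract chromatic number k: for every ε > 0 there exist δ > 0 and N such that for every n ≥ N, every n-vertex graph G ∈ 𝓐 with h(G) ≥ (1−δ)·g(n,(𝓐,𝓕)) can be turned into the Turán graph T(n,k−1) by adding and/or deleting at most ε·n² edges. -/
open SimpleGraph

/-- A family of finite graphs, given for each `n` as a predicate on graphs on `Fin n`. -/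
abbrev GraphFamily := ∀ n : ℕ, SimpleGraph (Fin n) → Prop

/-- `G` contains a copy of `F` as a (not necessarily induced) subgraph:
there is an injective map of vertices sending edges to edges. -/
def ContainsCopy {α β : Type} (G : SimpleGraph α) (F : SimpleGraph β) : Prop :=
  ∃ f : β → α, Function.Injective f ∧ ∀ ⦃u v⦄, F.Adj u v → G.Adj (f u) (f v)

/-- Membership of a graph on an arbitrary vertex type in a family, up to isomorphism. -/
def MemFam (𝓐 : GraphFamily) {β : Type} (G : SimpleGraph β) : Prop :=
  ∃ (n : ℕ) (H : SimpleGraph (Fin n)), Nonempty (G ≃g H) ∧ 𝓐 n H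

/-- The family is closed under isomorphism. -/
def IsoClosed (𝓐 : GraphFamily) : Prop :=
  ∀ (n : ℕ) (G G' : SimpleGraph (Fin n)), Nonempty (G ≃g G') → 𝓐 n G → 𝓐 n G'

/-- The complete multipartite graph with part sizes `m 0, …, m (r-1)`. -/
def completeMultipartite {r : ℕ} (m : Fin r → ℕ) : SimpleGraph (Σ i, Fin (m i)) :=
  completeMultipartiteGraph (fun i => Fin (m i))

/-- `(𝓐, 𝓐ᶜ)` is a suitable partition, witnessed by the integer `k ≥ 2`: for all
sufficiently large `n`, every complete `(k-1)`-partite graph with all parts of size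
at least `n` belongs to `𝓐`, and no graph in `𝓐` contains the Turán graph `T(n,k)`
as a subgraph. -/
def SuitableWith (𝓐 : GraphFamily) (k : ℕ) : Prop :=
  2 ≤ k ∧ ∃ N : ℕ, ∀ n, N ≤ n →
    ((∀ m : Fin (k - 1) → ℕ, (∀ i, n ≤ m i) → MemFam 𝓐 (completeMultipartite m)) ∧
     ∀ (n' : ℕ) (G : SimpleGraph (Fin n')), 𝓐 n' G → ¬ ContainsCopy G (turanGraph n k))

/-- A partition `(𝓐, 𝓐ᶜ)` is suitable: either complete graphs are eventually in `𝓐`,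
or some `k ≥ 2` witnesses suitability. -/
def Suitable (𝓐 : GraphFamily) : Prop :=
  (∃ N : ℕ, ∀ n, N ≤ n → 𝓐 n ⊤) ∨ ∃ k : ℕ, SuitableWith 𝓐 k

/-- Every complete `r`-partite graph with all parts sufficiently large is in `𝓐`. -/
def AllBigMultipartiteIn (𝓐 : GraphFamily) (r : ℕ) : Prop :=
  ∃ N : ℕ, ∀ m : Fin r → ℕ, (∀ i, N ≤ m i) → MemFam 𝓐 (completeMultipartite m)

/-- The partition `(𝓐, 𝓐ᶜ)` has (finite) abstract chromatic number `k`: complete graphs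
are not eventually in `𝓐`, and `k` is the largest integer such that every complete
`(k-1)`-partite graph with all parts sufficiently large is in `𝓐`. -/
def HasAbsChromNum (𝓐 : GraphFamily) (k : ℕ) : Prop :=
  (¬ ∃ N : ℕ, ∀ n, N ≤ n → 𝓐 n ⊤) ∧
  AllBigMultipartiteIn 𝓐 (k - 1) ∧
  ∀ j : ℕ, k ≤ j → ¬ AllBigMultipartiteIn 𝓐 j

/-- A graph parameter: a real value for every finite graph. -/
abbrev GraphParam := ∀ n : ℕ, SimpleGraph (Fin n) → ℝ

/-- A graph parameter is isomorphism-invariant and nonnegative. -/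
def IsGraphParam (h : GraphParam) : Prop :=
  (∀ (n : ℕ) (G G' : SimpleGraph (Fin n)), Nonempty (G ≃g G') → h n G = h n G') ∧
  ∀ (n : ℕ) (G : SimpleGraph (Fin n)), 0 ≤ h n G

/-- `g(n, F)`: the maximum of `h` over `F`-free graphs on `n` vertices. -/
noncomputable def exRel (h : GraphParam) (n : ℕ) {β : Type} (F : SimpleGraph β) : ℝ :=
  sSup {x : ℝ | ∃ G : SimpleGraph (Fin n), ¬ ContainsCopy G F ∧ h n G = x}

/-- `g(n, (𝓐, 𝓐ᶜ))`: the maximum of `h` over `n`-vertex graphs in `𝓐`. -/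
noncomputable def exFam (h : GraphParam) (𝓐 : GraphFamily) (n : ℕ) : ℝ :=
  sSup {x : ℝ | ∃ G : SimpleGraph (Fin n), 𝓐 n G ∧ h n G = x}

/-- `G` is a complete `r`-partite graph (some parts possibly empty). -/
def IsCompMultipartite {n : ℕ} (G : SimpleGraph (Fin n)) (r : ℕ) : Prop :=
  ∃ m : Fin r → ℕ, Nonempty (G ≃g completeMultipartite m)

/-- `g_h` is weakly `k`-ESS. -/
def WeaklyESS (h : GraphParam) (k : ℕ) : Prop :=
  ∀ (nF : ℕ) (F : SimpleGraph (Fin nF)), F.chromaticNumber = (k : ℕ∞) →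
    ∀ ε : ℝ, 0 < ε → ∃ N : ℕ, ∀ n, N ≤ n →
      ∃ T : SimpleGraph (Fin n), IsCompMultipartite T (k - 1) ∧
        (1 - ε) * h n T ≤ exRel h n F ∧ exRel h n F ≤ (1 + ε) * h n T

/-- `g_h` is strongly `k`-ESS. -/
def StronglyESS (h : GraphParam) (k : ℕ) : Prop :=
  ∀ (nF : ℕ) (F : SimpleGraph (Fin nF)), F.chromaticNumber = (k : ℕ∞) →
    ∀ ε : ℝ, 0 < ε → ∃ N : ℕ, ∀ n, N ≤ n →
      (1 - ε) * h n (turanGraph n (k - 1)) ≤ exRel h n F ∧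
        exRel h n F ≤ (1 + ε) * h n (turanGraph n (k - 1))

/-- The edit distance between two graphs on the same vertex set: the size of the
symmetric difference of the edge sets. -/
noncomputable def editDist {n : ℕ} (G T : SimpleGraph (Fin n)) : ℕ :=
  (symmDiff G.edgeSet T.edgeSet).ncard

/-- `g_h` is weakly `k`-ESS-stable. -/
def WeaklyESSStable (h : GraphParam) (k : ℕ) : Prop :=
  WeaklyESS h k ∧
  ∀ (nF : ℕ) (F : SimpleGraph (Fin nF)), F.chromaticNumber = (k : ℕ∞) →
    ∀ ε : ℝ, 0 < ε → ∃ δ : ℝ, 0 < δ ∧ ∃ N : ℕ, ∀ n, N ≤ n →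
      ∀ G : SimpleGraph (Fin n), ¬ ContainsCopy G F →
        (1 - δ) * exRel h n F ≤ h n G →
        ∃ T : SimpleGraph (Fin n), IsCompMultipartite T (k - 1) ∧
          (editDist G T : ℝ) ≤ ε * (n : ℝ) ^ 2

/-- `g_h` is strongly `k`-ESS-stable. -/
def StronglyESSStable (h : GraphParam) (k : ℕ) : Prop :=
  StronglyESS h k ∧
  ∀ (nF : ℕ) (F : SimpleGraph (Fin nF)), F.chromaticNumber = (k : ℕ∞) →
    ∀ ε : ℝ, 0 < ε → ∃ δ : ℝ, 0 < δ ∧ ∃ N : ℕ, ∀ n, N ≤ n →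
      ∀ G : SimpleGraph (Fin n), ¬ ContainsCopy G F →
        (1 - δ) * exRel h n F ≤ h n G →
        (editDist G (turanGraph n (k - 1)) : ℝ) ≤ ε * (n : ℝ) ^ 2

/-- `σ(F)`: the smallest size of a color class among all proper `k`-colorings of `F`. -/
noncomputable def graphSigma {nF : ℕ} (F : SimpleGraph (Fin nF)) (k : ℕ) : ℕ :=
  sInf {t : ℕ | ∃ C : F.Coloring (Fin k), ∃ i : Fin k,
    (Finset.univ.filter fun v => C v = i).card = t}

/-- Part sizes obtained from `m` by adding `t` parts of size `1` (adding `t`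
universal vertices to the complete multipartite graph with parts `m`). -/
def addUniversal (t : ℕ) {r : ℕ} (m : Fin r → ℕ) : Fin (t + r) → ℕ :=
  fun i => if h : (i : ℕ) < t then 1 else m ⟨(i : ℕ) - t, by have := i.isLt; omega⟩

/-- `T(n, r, t)`: the Turán graph `T(n - t, r)` together with `t` universal vertices
(the vertices with value `< t`). -/
def turanPlus (n r t : ℕ) : SimpleGraph (Fin n) :=
  SimpleGraph.fromRel fun x y =>
    (x : ℕ) < t ∨ ((x : ℕ) - t) % r ≠ ((y : ℕ) - t) % r

/-- `T⁺(n, r)`: the Turán graph `T(n, r)` with one extra edge (between `r - 1` and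
`2r - 1`) inside one of its smallest parts (the residue class of `r - 1`). -/
def turanPlusEdge (n r : ℕ) : SimpleGraph (Fin n) :=
  SimpleGraph.fromRel fun x y =>
    (x : ℕ) % r ≠ (y : ℕ) % r ∨ ((x : ℕ) = r - 1 ∧ (y : ℕ) = 2 * r - 1)

/-- `σ(𝓐, 𝓐ᶜ)`: the smallest minimum part size (= σ) of a complete `k`-partite graph,
with all `k` parts nonempty, that is contained in no member of `𝓐`. -/
noncomputable def famSigma (𝓐 : GraphFamily) (k : ℕ) : ℕ :=
  sInf {t : ℕ | ∃ m : Fin k → ℕ, (∀ i, 1 ≤ m i) ∧ (∃ i, m i = t ∧ ∀ j, m i ≤ m j) ∧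
    ∀ (n : ℕ) (G : SimpleGraph (Fin n)), 𝓐 n G → ¬ ContainsCopy G (completeMultipartite m)}

/-- `g_h` is weakly `k`-ESS-sigma. -/
def WeaklyESSSigma (h : GraphParam) (k : ℕ) : Prop :=
  ∀ (nF : ℕ) (F : SimpleGraph (Fin nF)), F.chromaticNumber = (k : ℕ∞) →
    ∃ N : ℕ, ∀ n, N ≤ n → ∃ (m : Fin (k - 1) → ℕ) (T : SimpleGraph (Fin n)),
      Nonempty (T ≃g completeMultipartite (addUniversal (graphSigma F k - 1) m)) ∧
      exRel h n F = h n T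

/-- `g_h` is strongly `k`-ESS-sigma. -/
def StronglyESSSigma (h : GraphParam) (k : ℕ) : Prop :=
  ∀ (nF : ℕ) (F : SimpleGraph (Fin nF)), F.chromaticNumber = (k : ℕ∞) →
    ∃ N : ℕ, ∀ n, N ≤ n →
      exRel h n F = h n (turanPlus n (k - 1) (graphSigma F k - 1))

/-- The number of copies of `F` in `G`: subgraphs of `G` isomorphic to `F`. -/
noncomputable def copyCount {n : ℕ} {β : Type} (G : SimpleGraph (Fin n))
    (F : SimpleGraph β) : ℕ :=
  Nat.card {H : G.Subgraph // Nonempty (F ≃g H.coe)}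

/-- `g_h` is `k`-ESS-supersat. -/
def ESSSupersat (h : GraphParam) (k : ℕ) : Prop :=
  ∀ (nF : ℕ) (F : SimpleGraph (Fin nF)), F.chromaticNumber = (k : ℕ∞) →
    ∀ ε : ℝ, 0 < ε → ∃ δ : ℝ, 0 < δ ∧ ∃ N : ℕ, ∀ n, N ≤ n →
      ∀ G : SimpleGraph (Fin n), (1 + ε) * exRel h n F < h n G →
        δ * (n : ℝ) ^ nF ≤ (_root_.copyCount G F : ℝ)

/-- A proper edge-coloring of `G`, given as a symmetric function of the two endpoints:
edges sharing a vertex receive distinct colors. -/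
def ProperEdgeColoring {α C : Type} (G : SimpleGraph α) (c : α → α → C) : Prop :=
  (∀ u v, c u v = c v u) ∧
  ∀ u v w, G.Adj u v → G.Adj u w → v ≠ w → c u v ≠ c u w

/-- The edge-colored graph `(G, c)` contains a rainbow copy of `F`. -/
def HasRainbowCopy {α β C : Type} (G : SimpleGraph α) (c : α → α → C)
    (F : SimpleGraph β) : Prop :=
  ∃ f : β → α, Function.Injective f ∧ (∀ ⦃u v⦄, F.Adj u v → G.Adj (f u) (f v)) ∧
    ∀ u v u' v', F.Adj u v → F.Adj u' v' → s(u, v) ≠ s(u', v') →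
      c (f u) (f v) ≠ c (f u') (f v')

/-- The family `𝓐` is hereditary: closed under taking induced subgraphs
(equivalently, under induced-subgraph embeddings). -/
def Hereditary (𝓐 : GraphFamily) : Prop :=
  ∀ (n n' : ℕ) (G : SimpleGraph (Fin n)) (G' : SimpleGraph (Fin n')),
    𝓐 n G → Nonempty (G' ↪g G) → 𝓐 n' G'

/-- The family `𝓐` is monotone: closed under taking subgraphs. -/
def MonotoneFam (𝓐 : GraphFamily) : Prop :=
  ∀ (n n' : ℕ) (G : SimpleGraph (Fin n)) (G' : SimpleGraph (Fin n')),
    𝓐 n G → ContainsCopy G G' → 𝓐 n' G'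

/-- `(𝓐, 𝓐ᶜ)` is an edge-critical partition with abstract chromatic number `k`. -/
def EdgeCritical (𝓐 : GraphFamily) (k : ℕ) : Prop :=
  Suitable 𝓐 ∧ HasAbsChromNum 𝓐 k ∧
  ∃ N : ℕ, ∀ n, N ≤ n → ∀ (n' : ℕ) (G : SimpleGraph (Fin n')), 𝓐 n' G →
    ¬ ContainsCopy G (turanPlusEdge n (k - 1))

/-- The graph obtained from `G` by adding a new vertex (namely `none`) joined to all
neighbors of the vertex `v`. -/
def duplicateVertex {n : ℕ} (G : SimpleGraph (Fin n)) (v : Fin n) :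
    SimpleGraph (Option (Fin n)) :=
  SimpleGraph.fromRel fun x y =>
    match x, y with
    | some a, some b => G.Adj a b
    | none, some b => G.Adj v b
    | _, _ => False

/-- The graph parameter `h` is balanced for `k`. -/
def BalancedParam (h : GraphParam) (k : ℕ) : Prop :=
  ∃ a : ℝ, 0 < a ∧
    (∃ C : ℝ, 0 < C ∧ ∀ (n : ℕ) (G : SimpleGraph (Fin n)) (u v : Fin n),
      u ≠ v → ¬ G.Adj u v →
      |h n (G ⊔ SimpleGraph.fromEdgeSet {s(u, v)}) - h n G| ≤ C * (n : ℝ) ^ a) ∧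
    (∃ C : ℝ, 0 < C ∧ ∀ (n : ℕ) (G : SimpleGraph (Fin n)) (v : Fin n)
        (G'' : SimpleGraph (Fin (n + 1))), Nonempty (G'' ≃g duplicateVertex G v) →
      |h (n + 1) G'' - h n G| ≤ C * (n : ℝ) ^ (a + 1)) ∧
    (∀ c : ℝ, 0 < c → ∃ (n₀ : ℕ) (c₁ c₂ : ℝ), 0 < c₁ ∧ 0 < c₂ ∧
      ∀ n, n₀ ≤ n → ∀ m : Fin (k - 1) → ℕ, (∀ i, c * (n : ℝ) ≤ (m i : ℝ)) →
        ∀ G : SimpleGraph (Fin n), Nonempty (G ≃g completeMultipartite m) →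
          ((∀ u v : Fin n, u ≠ v → ¬ G.Adj u v →
              c₁ * (n : ℝ) ^ a ≤ h n (G ⊔ SimpleGraph.fromEdgeSet {s(u, v)}) - h n G ∧
              h n (G ⊔ SimpleGraph.fromEdgeSet {s(u, v)}) - h n G ≤ c₂ * (n : ℝ) ^ a) ∧
           (∀ (v : Fin n) (G'' : SimpleGraph (Fin (n + 1))),
              Nonempty (G'' ≃g duplicateVertex G v) →
              c₁ * (n : ℝ) ^ (a + 1) ≤ h (n + 1) G'' - h n G ∧
              h (n + 1) G'' - h n G ≤ c₂ * (n : ℝ) ^ (a + 1)))) ∧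
    (∀ c : ℝ, 0 < c → ∃ (n₀ : ℕ) (c₁ c₂ : ℝ), 0 < c₁ ∧ 0 < c₂ ∧
      ∀ n, n₀ ≤ n → ∀ m : Fin (k - 1) → ℕ, (∀ i, c * (n : ℝ) ≤ (m i : ℝ)) →
        ∀ G : SimpleGraph (Fin n), Nonempty (G ≃g completeMultipartite m) →
          ∀ G''' : SimpleGraph (Fin n), G''' ≤ G →
            c₁ * ((G.edgeSet.ncard - G'''.edgeSet.ncard : ℕ) : ℝ) * (n : ℝ) ^ a ≤
              h n G - h n G''' ∧
            h n G - h n G''' ≤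
              c₂ * ((G.edgeSet.ncard - G'''.edgeSet.ncard : ℕ) : ℝ) * (n : ℝ) ^ a)

/-!
A suitable partition with abstract chromatic number `k` is suitable with witness `k` itself:
a witness `k' > k` would put all large complete `(k' - 1)`-partite graphs into `𝓐`, and a witness
`k' < k` is impossible since the large complete `(k - 1)`-partite graphs of `𝓐` contain
`T(M, k')`. So for a fixed large `M` every graph of `𝓐` is `F`-free for
`F = T(M, k)`, which has chromatic number `k`, while `T(n, k - 1) ∈ 𝓐` for large `n`. Hence
`h(T(n, k - 1)) ≤ g(n, (𝓐, 𝓕))` and, by strong `k`-ESS, `g(n, F) ≤ (1 + o(1)) h(T(n, k - 1))`: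
a near-extremal graph of `𝓐` is a near-extremal `F`-free graph, and `F`-stability applies.
-/

lemma containsCopy_iff_isContained {α β : Type} {G : SimpleGraph α} {F : SimpleGraph β} :
    ContainsCopy G F ↔ F ⊑ G :=
  ⟨fun ⟨f, hf, hadj⟩ => ⟨⟨⟨f, fun huv => hadj huv⟩, hf⟩⟩,
    fun ⟨c⟩ => ⟨c, c.injective, fun _ _ huv => c.toHom.map_adj huv⟩⟩

namespace SimpleGraph

def completeMultipartiteGraph.congrRight {ι : Type*} {V W : ι → Type*} (e : ∀ i, V i ≃ W i) :
    completeMultipartiteGraph V ≃g completeMultipartiteGraph W :=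
  { Equiv.sigmaCongrRight e with map_rel_iff' := Iff.rfl }

lemma completeMultipartiteGraph.isContained_of_embedding {ι κ : Type*} {V : ι → Type*}
    {W : κ → Type*} (g : ι ↪ κ) (e : ∀ i, V i ↪ W (g i)) :
    completeMultipartiteGraph V ⊑ completeMultipartiteGraph W :=
  ⟨⟨⟨Sigma.map g fun i => e i, fun huv heq => huv (g.injective heq)⟩,
    g.injective.sigma_map fun i => (e i).injective⟩⟩

section Turan

variable {n r : ℕ}

def turanPart (hr : 0 < r) (v : Fin n) : Fin r := ⟨v % r, Nat.mod_lt _ hr⟩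

def turanGraph.isoCompleteMultipartiteGraph (hr : 0 < r) :
    turanGraph n r ≃g completeMultipartiteGraph fun i => {v : Fin n // turanPart hr v = i} :=
  { (Equiv.sigmaFiberEquiv (turanPart hr)).symm with
    map_rel_iff' := not_congr Fin.ext_iff }

lemma div_le_card_turanPart_fiber (hr : 0 < r) (i : Fin r) :
    n / r ≤ Fintype.card {v : Fin n // turanPart hr v = i} := by
  have hlt (j : Fin (n / r)) : (i : ℕ) + j * r < n :=
    calc (i : ℕ) + j * r < (j + 1) * r := by linarith [i.isLt]
      _ ≤ n / r * r := Nat.mul_le_mul_right r j.isLt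
      _ ≤ n := Nat.div_mul_le_self n r
  let f (j : Fin (n / r)) : {v : Fin n // turanPart hr v = i} :=
    ⟨⟨i + j * r, hlt j⟩, by ext; simp [turanPart, Nat.mod_eq_of_lt i.isLt]⟩
  have hf : Function.Injective f := fun j j' hjj' => by
    simp only [f, Subtype.mk.injEq, Fin.mk.injEq, Nat.add_left_cancel_iff] at hjj'
    exact Fin.ext (Nat.eq_of_mul_eq_mul_right hr hjj')
  simpa using Fintype.card_le_of_injective f hf

lemma chromaticNumber_turanGraph (hr : 0 < r) (hrn : r ≤ n) :
    (turanGraph n r).chromaticNumber = r := by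
  have hpart (i : Fin r) : {v : Fin n // turanPart hr v = i} :=
    ⟨Fin.castLE hrn i, by ext; simp [turanPart, Nat.mod_eq_of_lt i.isLt]⟩
  rw [chromaticNumber_congr (turanGraph.isoCompleteMultipartiteGraph hr),
    completeMultipartiteGraph.chromaticNumber _ hpart, Fintype.card_fin]

lemma turanGraph_isContained_completeMultipartite {t : ℕ} (ht : 0 < t) (htr : t ≤ r)
    {m : Fin r → ℕ} (hm : ∀ i, n ≤ m i) : turanGraph n t ⊑ completeMultipartite m :=
  (turanGraph.isoCompleteMultipartiteGraph ht).isContained.trans <|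
    completeMultipartiteGraph.isContained_of_embedding (Fin.castLEEmb htr) fun _ =>
      (Function.Embedding.subtype _).trans (Fin.castLEEmb (hm _))

end Turan

end SimpleGraph

open SimpleGraph

lemma IsoClosed.mem_of_iso {𝓐 : GraphFamily} (hiso : IsoClosed 𝓐) {n : ℕ} {β : Type}
    {G : SimpleGraph (Fin n)} {H : SimpleGraph β} (hH : MemFam 𝓐 H) (e : G ≃g H) : 𝓐 n G := by
  obtain ⟨n', H', ⟨e'⟩, hH'⟩ := hH
  obtain rfl : n = n' := by simpa using Fintype.card_congr (e.trans e').toEquiv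
  exact hiso n H' G ⟨(e.trans e').symm⟩ hH'

lemma AllBigMultipartiteIn.exists_turanGraph_mem {𝓐 : GraphFamily} {r : ℕ}
    (hbig : AllBigMultipartiteIn 𝓐 r) (hiso : IsoClosed 𝓐) (hr : 0 < r) :
    ∃ N, ∀ n, N ≤ n → 𝓐 n (turanGraph n r) := by
  obtain ⟨N, hN⟩ := hbig
  refine ⟨r * N, fun n hn => hiso.mem_of_iso (hN _ fun i => ?_)
    ((turanGraph.isoCompleteMultipartiteGraph hr).trans
      (completeMultipartiteGraph.congrRight fun _ => Fintype.equivFin _))⟩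
  calc N ≤ n / r := (Nat.le_div_iff_mul_le hr).2 (by linarith)
    _ ≤ _ := div_le_card_turanPart_fiber hr i

lemma SuitableWith.eq_of_hasAbsChromNum {𝓐 : GraphFamily} {k k' : ℕ} (hs : SuitableWith 𝓐 k')
    (habs : HasAbsChromNum 𝓐 k) : k' = k := by
  obtain ⟨hk', N, hN⟩ := hs
  obtain ⟨-, ⟨N₁, hN₁⟩, hmax⟩ := habs
  refine le_antisymm (not_lt.1 fun hlt => hmax (k' - 1) (by omega) ⟨N, (hN N le_rfl).1⟩)
    (not_lt.1 fun hlt => ?_)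
  obtain ⟨n, H, ⟨e⟩, hH⟩ := hN₁ (fun _ => max N N₁) fun _ => le_max_right _ _
  exact (hN _ (le_max_left _ _)).2 n H hH <| containsCopy_iff_isContained.2 <|
    (turanGraph_isContained_completeMultipartite (by omega) (by omega) fun _ => le_rfl).trans
      e.isContained

lemma Suitable.suitableWith_of_hasAbsChromNum {𝓐 : GraphFamily} {k : ℕ} (hs : Suitable 𝓐)
    (habs : HasAbsChromNum 𝓐 k) : SuitableWith 𝓐 k := by
  obtain ⟨k', hk'⟩ := hs.resolve_left habs.1
  rwa [← hk'.eq_of_hasAbsChromNum habs]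

section Extremal

variable (h : GraphParam) {n : ℕ}

lemma bddAbove_setOf_param (P : SimpleGraph (Fin n) → Prop) :
    BddAbove {x : ℝ | ∃ G, P G ∧ h n G = x} :=
  (Set.finite_range (h n)).bddAbove.mono <| by rintro _ ⟨G, -, rfl⟩; exact ⟨G, rfl⟩

variable {h}

lemma le_exRel {β : Type} {F : SimpleGraph β} {G : SimpleGraph (Fin n)}
    (hG : ¬ ContainsCopy G F) : h n G ≤ exRel h n F :=
  le_csSup (bddAbove_setOf_param h _) ⟨G, hG, rfl⟩

lemma le_exFam {𝓐 : GraphFamily} {G : SimpleGraph (Fin n)} (hG : 𝓐 n G) :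
    h n G ≤ exFam h 𝓐 n :=
  le_csSup (bddAbove_setOf_param h _) ⟨G, hG, rfl⟩

end Extremal

/-- With `d = min δ 1`: `t ≥ 0` is forced by `t ≤ gF ≤ (1 + d/4) t`, and
`(1 - δ) gF ≤ (1 - d)(1 + d/4) t ≤ (1 - d/4) t`. -/
lemma one_sub_mul_le_of_le_one_add_mul {δ t gF gA x : ℝ} (hδ : 0 < δ) (htF : t ≤ gF)
    (htA : t ≤ gA) (hF : gF ≤ (1 + min δ 1 / 4) * t) (hx : (1 - min δ 1 / 4) * gA ≤ x) :
    (1 - δ) * gF ≤ x := by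
  have hd : 0 < min δ 1 := lt_min hδ one_pos
  have hd1 : min δ 1 ≤ 1 := min_le_right _ _
  have hdδ : min δ 1 ≤ δ := min_le_left _ _
  have ht : 0 ≤ t := by nlinarith
  nlinarith [mul_le_mul_of_nonneg_left hF (by linarith : (0 : ℝ) ≤ 1 - min δ 1),
    mul_le_mul_of_nonneg_left htA (by linarith : (0 : ℝ) ≤ 1 - min δ 1 / 4),
    mul_le_mul_of_nonneg_right hdδ (ht.trans htF)]

theorem stronglyESSStable_of_partition_general (k : ℕ) (h : GraphParam)
    (hstab : StronglyESSStable h k)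
    (𝓐 : GraphFamily) (hiso : IsoClosed 𝓐) (hsuit : Suitable 𝓐)
    (habs : HasAbsChromNum 𝓐 k) :
    ∀ ε : ℝ, 0 < ε → ∃ δ : ℝ, 0 < δ ∧ ∃ N : ℕ, ∀ n, N ≤ n →
      ∀ G : SimpleGraph (Fin n), 𝓐 n G → (1 - δ) * exFam h 𝓐 n ≤ h n G →
        (editDist G (turanGraph n (k - 1)) : ℝ) ≤ ε * (n : ℝ) ^ 2 := by
  intro ε hε
  obtain ⟨hk, N, hN⟩ := hsuit.suitableWith_of_hasAbsChromNum habs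
  set F := turanGraph (max N k) k
  have hχ : F.chromaticNumber = k := chromaticNumber_turanGraph (by omega) (le_max_right _ _)
  have hfree : ∀ n G, 𝓐 n G → ¬ ContainsCopy G F := (hN _ (le_max_left _ _)).2
  obtain ⟨δ, hδ, N₁, hN₁⟩ := hstab.2 _ F hχ ε hε
  obtain ⟨N₂, hN₂⟩ := hstab.1 _ F hχ (min δ 1 / 4) (by positivity)
  obtain ⟨N₃, hN₃⟩ := habs.2.1.exists_turanGraph_mem hiso (by omega)
  refine ⟨min δ 1 / 4, by positivity, max N₁ (max N₂ N₃), fun n hn G hG hGA =>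
    hN₁ n (by omega) G (hfree n G hG) ?_⟩
  have hT := hN₃ n (by omega)
  exact one_sub_mul_le_of_le_one_add_mul hδ (le_exRel (hfree n _ hT)) (le_exFam hT)
    (hN₂ n (by omega)).2 hGA

/-- If `g_h` is strongly `k`-ESS-stable, then `g_h` is strongly
`k`-ESS-stable with respect to every suitable partition with abstract chromatic
number `k`. -/
theorem stronglyESSStable_of_partition (k : ℕ) (hk : 2 ≤ k) (h : GraphParam)
    (hparam : IsGraphParam h) (hstab : StronglyESSStable h k)
    (𝓐 : GraphFamily) (hiso : IsoClosed 𝓐) (hsuit : Suitable 𝓐)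
    (habs : HasAbsChromNum 𝓐 k) :
    ∀ ε : ℝ, 0 < ε → ∃ δ : ℝ, 0 < δ ∧ ∃ N : ℕ, ∀ n, N ≤ n →
      ∀ G : SimpleGraph (Fin n), 𝓐 n G → (1 - δ) * exFam h 𝓐 n ≤ h n G →
        (editDist G (turanGraph n (k - 1)) : ℝ) ≤ ε * (n : ℝ) ^ 2 :=
  stronglyESSStable_of_partition_general k h hstab 𝓐 hiso hsuit habs
end

section
/- Let F be a graph with chromatic number k ≥ 3 that has a color-critical edge. Let 𝓐 be the family of all finite graphs G that admit a proper edge-coloring with no rainbow copy of F, and let 𝓕 be the family of all other graphs. Then (𝓐,𝓕) is an edge-critical partition: it is suitable with abstract chromatic number k, and for all sufficiently large n no graph in 𝓐 contains T⁺(n,k−1) as a subgraph, where T⁺(n,k−1) is obtained from the Turán graph T(n,k−1) by adding one edge inside one of its smallest parts. -/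
open SimpleGraph

/-- The family of graphs admitting a proper edge-coloring with no rainbow copy of `F`. -/
def rainbowFreeFam {nF : ℕ} (F : SimpleGraph (Fin nF)) : GraphFamily :=
  fun n G => ∃ (C : Type) (c : Fin n → Fin n → C),
    ProperEdgeColoring G c ∧ ¬ HasRainbowCopy G c F

/-!
Fix a proper edge-colouring of the host graph and embed `F` greedily, one vertex at a time,
each into a prescribed candidate set. When a set `D` of vertices is already placed by `f`, a
candidate is excluded only if it is an image, or if its edge to a placed neighbour `f j` repeats
a colour `c (f a) (f b)` already used; properness makes the latter exclude at most one candidate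
per triple `(j, a, b)` of `D`. So candidate sets larger than `|F| + |F|³` always yield a
rainbow copy.

With candidate sets the parts of a blow-up indexed by a proper colouring of `F`, this puts a
rainbow `F` in every properly edge-coloured large `T(n, k)`, `K_n` and complete `j`-partite
graph with `j ≥ k`. In `T⁺(n, k-1)` the colour-critical edge `uv` is pinned to the extra edge,
and the other vertices are placed by a `(k-1)`-colouring of `F - uv` in which `u` and `v` get
the colour of the part containing that edge. Conversely, complete `(k-1)`-partite graphs contain
no copy of `F` at all, so colouring all their edges differently places them in `𝓐`.
-/

open Finset

section Rainbow

variable {α β C : Type} {G : SimpleGraph α} {c : α → α → C} {F : SimpleGraph β}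

def IsRainbowOn (G : SimpleGraph α) (c : α → α → C) (F : SimpleGraph β) (f : β → α)
    (D : Finset β) : Prop :=
  Set.InjOn f D ∧ (∀ a ∈ D, ∀ b ∈ D, F.Adj a b → G.Adj (f a) (f b)) ∧
    ∀ a ∈ D, ∀ b ∈ D, ∀ a' ∈ D, ∀ b' ∈ D, F.Adj a b → F.Adj a' b' →
      c (f a) (f b) = c (f a') (f b') → s(a, b) = s(a', b')

lemma isRainbowOn_empty (f : β → α) : IsRainbowOn G c F f ∅ := by
  simp [IsRainbowOn]

lemma isRainbowOn_pair [DecidableEq β] {f : β → α} {u v : β} (huv : F.Adj u v)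
    (hf : G.Adj (f u) (f v)) : IsRainbowOn G c F f {u, v} := by
  have hedge : ∀ a ∈ ({u, v} : Finset β), ∀ b ∈ ({u, v} : Finset β), F.Adj a b →
      s(a, b) = s(u, v) ∧ G.Adj (f a) (f b) := by
    simp only [mem_insert, mem_singleton]
    rintro a (rfl | rfl) b (rfl | rfl) hab
    · exact absurd hab (F.irrefl)
    · exact ⟨rfl, hf⟩
    · exact ⟨Sym2.eq_swap, hf.symm⟩
    · exact absurd hab (F.irrefl)
  refine ⟨?_, fun a ha b hb hab => (hedge a ha b hb hab).2,
    fun a ha b hb a' ha' b' hb' hab hab' _ =>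
      (hedge a ha b hb hab).1.trans (hedge a' ha' b' hb' hab').1.symm⟩
  rw [coe_pair, Set.injOn_pair]
  exact fun h => absurd h (G.ne_of_adj hf)

lemma IsRainbowOn.hasRainbowCopy [Fintype β] {f : β → α} (hf : IsRainbowOn G c F f univ) :
    HasRainbowCopy G c F := by
  obtain ⟨hinj, hadj, hrain⟩ := hf
  refine ⟨f, by simpa using hinj, fun a b h => hadj a (mem_univ _) b (mem_univ _) h, ?_⟩
  exact fun a b a' b' h h' hne heq =>
    hne (hrain a (mem_univ _) b (mem_univ _) a' (mem_univ _) b' (mem_univ _) h h' heq)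

lemma exists_oriented_edge_of_mem_insert [DecidableEq β] (hc : ∀ x y, c x y = c y x)
    {f : β → α} {D : Finset β} {i a b : β} (ha : a ∈ insert i D) (hb : b ∈ insert i D)
    (hab : F.Adj a b) : ∃ a₀ ∈ insert i D, ∃ b₀ ∈ D,
      F.Adj a₀ b₀ ∧ s(a, b) = s(a₀, b₀) ∧ c (f a) (f b) = c (f a₀) (f b₀) := by
  rcases mem_insert.mp hb with hb | hb
  · subst b
    rcases mem_insert.mp ha with ha | ha
    · subst a; exact absurd hab (F.irrefl)
    · exact ⟨i, mem_insert_self _ _, a, ha, hab.symm, Sym2.eq_swap, hc _ _⟩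
  · exact ⟨a, ha, b, hb, hab, rfl, rfl⟩

lemma IsRainbowOn.update [DecidableEq β] (hc : ProperEdgeColoring G c) {f : β → α}
    {D : Finset β} (hf : IsRainbowOn G c F f D) {i : β} (hi : i ∉ D) {x : α}
    (hx_new : ∀ j ∈ D, x ≠ f j) (hx_adj : ∀ j ∈ D, F.Adj i j → G.Adj x (f j))
    (hx_col : ∀ j ∈ D, F.Adj i j → ∀ a ∈ D, ∀ b ∈ D, F.Adj a b → c x (f j) ≠ c (f a) (f b)) :
    IsRainbowOn G c F (Function.update f i x) (insert i D) := by
  obtain ⟨hinj, hadj, hrain⟩ := hf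
  set f' := Function.update f i x
  have hf'i : f' i = x := Function.update_self i x f
  have hf'D : ∀ j ∈ D, f' j = f j := fun j hj =>
    Function.update_of_ne (ne_of_mem_of_not_mem hj hi) x f
  have hrain' : ∀ a ∈ insert i D, ∀ b ∈ D, ∀ a' ∈ insert i D, ∀ b' ∈ D, F.Adj a b →
      F.Adj a' b' → c (f' a) (f' b) = c (f' a') (f' b') → s(a, b) = s(a', b') := by
    intro a ha b hb a' ha' b' hb' hab hab' heq
    rw [hf'D b hb, hf'D b' hb'] at heq
    rcases mem_insert.mp ha with ha | ha <;> rcases mem_insert.mp ha' with ha' | ha'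
    · subst a a'
      rw [hf'i] at heq
      by_contra hne
      have hbb' : f b ≠ f b' := fun h => hne (by rw [hinj hb hb' h])
      exact hc.2 x _ _ (hx_adj b hb hab) (hx_adj b' hb' hab') hbb' heq
    · subst a
      rw [hf'i, hf'D a' ha'] at heq
      exact absurd heq (hx_col b hb hab a' ha' b' hb' hab')
    · subst a'
      rw [hf'i, hf'D a ha] at heq
      exact absurd heq.symm (hx_col b' hb' hab' a ha b hb hab)
    · rw [hf'D a ha, hf'D a' ha'] at heq
      exact hrain a ha b hb a' ha' b' hb' hab hab' heq
  refine ⟨?_, ?_, ?_⟩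
  · rw [coe_insert, Set.injOn_insert (by simpa using hi)]
    refine ⟨(Set.InjOn.congr hinj fun j hj => (hf'D j hj).symm), ?_⟩
    rintro ⟨j, hj, hji⟩
    exact hx_new j hj (by rw [← hf'i, ← hji, hf'D j hj])
  · intro a ha b hb hab
    rcases mem_insert.mp ha with ha | ha <;> rcases mem_insert.mp hb with hb | hb
    · subst a b; exact absurd hab (F.irrefl)
    · subst a; rw [hf'i, hf'D b hb]; exact hx_adj b hb hab
    · subst b; rw [hf'i, hf'D a ha]; exact (hx_adj a ha hab.symm).symm
    · rw [hf'D a ha, hf'D b hb]; exact hadj a ha b hb hab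
  · intro a ha b hb a' ha' b' hb' hab hab' heq
    obtain ⟨a₀, ha₀, b₀, hb₀, hab₀, hs, hcol⟩ := exists_oriented_edge_of_mem_insert hc.1 ha hb hab
    obtain ⟨a₀', ha₀', b₀', hb₀', hab₀', hs', hcol'⟩ :=
      exists_oriented_edge_of_mem_insert hc.1 ha' hb' hab'
    rw [hs, hs']
    exact hrain' a₀ ha₀ b₀ hb₀ a₀' ha₀' b₀' hb₀' hab₀ hab₀' (hcol ▸ hcol' ▸ heq)

lemma IsRainbowOn.exists_update [DecidableEq β] (hc : ProperEdgeColoring G c)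
    {f : β → α} {D : Finset β} (hf : IsRainbowOn G c F f D) {i : β} (hi : i ∉ D)
    {P : Finset α} (hP : #D + #D ^ 3 < #P)
    (hPadj : ∀ x ∈ P, ∀ j ∈ D, F.Adj i j → x ≠ f j → G.Adj x (f j)) :
    ∃ x ∈ P, IsRainbowOn G c F (Function.update f i x) (insert i D) := by
  classical
  -- `x` must avoid the images of `D`, and for each triple `(j, a, b)` of `D` the at most one
  -- neighbour `x` of `f j` with `c (f j) x = c (f a) (f b)`
  let clash : β × β × β → Finset α := fun t =>
    {x ∈ P | G.Adj (f t.1) x ∧ c (f t.1) x = c (f t.2.1) (f t.2.2)}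
  have hclash : ∀ t, #(clash t) ≤ 1 := fun t => card_le_one.mpr fun x hx y hy => by
    simp only [clash, mem_filter] at hx hy
    by_contra hxy
    exact hc.2 _ _ _ hx.2.1 hy.2.1 hxy (hx.2.2.trans hy.2.2.symm)
  let bad := D.image f ∪ (D ×ˢ D ×ˢ D).biUnion clash
  have hbad : #bad < #P := calc
    #bad ≤ #(D.image f) + #((D ×ˢ D ×ˢ D).biUnion clash) := card_union_le _ _
    _ ≤ #D + #(D ×ˢ D ×ˢ D) * 1 :=
      add_le_add card_image_le (card_biUnion_le_card_mul _ _ _ fun t _ => hclash t)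
    _ = #D + #D ^ 3 := by rw [card_product, card_product]; ring
    _ < #P := hP
  obtain ⟨x, hxP, hxbad⟩ := exists_mem_notMem_of_card_lt_card hbad
  have hx_new : ∀ j ∈ D, x ≠ f j := fun j hj h =>
    hxbad (mem_union_left _ (mem_image.mpr ⟨j, hj, h.symm⟩))
  have hx_adj : ∀ j ∈ D, F.Adj i j → G.Adj x (f j) := fun j hj h =>
    hPadj x hxP j hj h (hx_new j hj)
  refine ⟨x, hxP, hf.update hc hi hx_new hx_adj fun j hj h a ha b hb _ heq => hxbad ?_⟩
  refine mem_union_right _ (mem_biUnion.mpr ⟨(j, a, b), by simp [ha, hb, hj], ?_⟩)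
  exact mem_filter.mpr ⟨hxP, (hx_adj j hj h).symm, (hc.1 _ _).trans heq⟩

theorem hasRainbowCopy_of_candidates [Fintype β] (hc : ProperEdgeColoring G c) (P : β → Finset α)
    (hPadj : ∀ i j, F.Adj i j → ∀ x ∈ P i, ∀ y ∈ P j, x ≠ y → G.Adj x y)
    {D₀ : Finset β} {f₀ : β → α} (h₀ : IsRainbowOn G c F f₀ D₀) (hf₀ : ∀ j ∈ D₀, f₀ j ∈ P j)
    (hP : ∀ i ∉ D₀, Fintype.card β + Fintype.card β ^ 3 < #(P i)) :
    HasRainbowCopy G c F := by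
  classical
  suffices ∀ T : Finset β, ∃ f, IsRainbowOn G c F f (D₀ ∪ T) ∧ ∀ j ∈ D₀ ∪ T, f j ∈ P j by
    obtain ⟨f, hf, -⟩ := this univ
    exact (union_eq_right.mpr (subset_univ D₀) ▸ hf).hasRainbowCopy
  intro T
  induction T using Finset.induction_on with
  | empty => exact ⟨f₀, by simpa using h₀, by simpa using hf₀⟩
  | insert i T _ ih =>
    obtain ⟨f, hf, hfP⟩ := ih
    rw [union_insert]
    by_cases hi : i ∈ D₀ ∪ T
    · rw [insert_eq_of_mem hi]
      exact ⟨f, hf, hfP⟩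
    have hD : #(D₀ ∪ T) ≤ Fintype.card β := card_le_univ _
    have hcard : #(D₀ ∪ T) + #(D₀ ∪ T) ^ 3 < #(P i) :=
      lt_of_le_of_lt (by gcongr) (hP i fun h => hi (mem_union_left _ h))
    obtain ⟨x, hxP, hx⟩ := hf.exists_update hc hi hcard
      fun x hx j hj h hne => hPadj i j h x hx (f j) (hfP j hj) hne
    refine ⟨_, hx, fun j hj => ?_⟩
    rcases mem_insert.mp hj with rfl | hj
    · simpa using hxP
    · rw [Function.update_of_ne (ne_of_mem_of_not_mem hj hi)]
      exact hfP j hj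

theorem hasRainbowCopy_of_coloring [Fintype β] {ι : Type} (hc : ProperEdgeColoring G c)
    (χ : F.Coloring ι) (Q : ι → Finset α) (hQ : ∀ a, Fintype.card β + Fintype.card β ^ 3 < #(Q a))
    (hQadj : ∀ a b, a ≠ b → ∀ x ∈ Q a, ∀ y ∈ Q b, x ≠ y → G.Adj x y) :
    HasRainbowCopy G c F := by
  classical
  have hne : ∀ i, (Q (χ i)).Nonempty := fun i => card_pos.mp (by have := hQ (χ i); omega)
  exact hasRainbowCopy_of_candidates hc (fun i => Q (χ i)) (fun i j h => hQadj _ _ (χ.valid h))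
    (isRainbowOn_empty fun i => (hne i).choose) (by simp) fun i _ => hQ (χ i)

theorem hasRainbowCopy_of_coloring_deleteEdge [Fintype β] {ι : Type}
    (hc : ProperEdgeColoring G c) {u v : β} (huv : F.Adj u v)
    (χ : (F.deleteEdges {s(u, v)}).Coloring ι) (Q : ι → Finset α)
    (hQ : ∀ a, Fintype.card β + Fintype.card β ^ 3 < #(Q a))
    (hQadj : ∀ a b, a ≠ b → ∀ x ∈ Q a, ∀ y ∈ Q b, x ≠ y → G.Adj x y)
    {y z : α} (hy : y ∈ Q (χ u)) (hz : z ∈ Q (χ v)) (hyz : G.Adj y z) :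
    HasRainbowCopy G c F := by
  classical
  let P : β → Finset α := fun i => if i = u then {y} else if i = v then {z} else Q (χ i)
  have hPQ : ∀ i, P i ⊆ Q (χ i) := by
    intro i
    simp only [P]
    split_ifs with hu hv
    · rw [hu]; exact singleton_subset_iff.mpr hy
    · rw [hv]; exact singleton_subset_iff.mpr hz
    · exact subset_rfl
  have hPadj : ∀ i j, F.Adj i j → ∀ x ∈ P i, ∀ w ∈ P j, x ≠ w → G.Adj x w := by
    intro i j hij x hx w hw hxw
    by_cases he : s(i, j) = s(u, v)
    · rcases Sym2.eq_iff.mp he with ⟨rfl, rfl⟩ | ⟨rfl, rfl⟩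
      · simp only [P, if_pos, if_neg huv.ne.symm, mem_singleton] at hx hw
        exact hx ▸ hw ▸ hyz
      · simp only [P, if_pos, if_neg huv.ne.symm, mem_singleton] at hx hw
        exact hx ▸ hw ▸ hyz.symm
    · exact hQadj _ _ (χ.valid (deleteEdges_adj.mpr ⟨hij, he⟩)) x (hPQ i hx) w (hPQ j hw) hxw
  refine hasRainbowCopy_of_candidates hc P hPadj (D₀ := {u, v})
    (f₀ := fun i => if i = u then y else z) (isRainbowOn_pair huv ?_) ?_ ?_
  · simpa [huv.ne.symm] using hyz
  · intro j hj
    rcases (by simpa using hj : j = u ∨ j = v) with rfl | rfl <;> simp [P, huv.ne.symm]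
  · intro i hi
    have hiuv : i ≠ u ∧ i ≠ v := by simpa [not_or] using hi
    simpa [P, hiuv.1, hiuv.2] using hQ (χ i)

end Rainbow

def residueClass (n r a : ℕ) : Finset (Fin n) := {x | (x : ℕ) % r = a}

lemma div_le_card_residueClass {n r a : ℕ} (ha : a < r) : n / r ≤ #(residueClass n r a) := by
  have hcount := Nat.count_modEq_card n (a.zero_le.trans_lt ha) a
  rw [Nat.count_eq_card_filter_range] at hcount
  have : #(residueClass n r a) = #{x ∈ range n | x ≡ a [MOD r]} := by
    rw [← card_map Fin.valEmbedding]
    congr 1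
    ext x
    simp only [residueClass, mem_map, mem_filter, mem_univ, true_and, Fin.valEmbedding_apply,
      mem_range, Nat.ModEq, Nat.mod_eq_of_lt ha]
    exact ⟨fun ⟨y, hy, hyx⟩ => hyx ▸ ⟨y.isLt, hy⟩, fun ⟨hx, hxr⟩ => ⟨⟨x, hx⟩, hxr, rfl⟩⟩
  omega

lemma mem_residueClass {n r a : ℕ} {x : Fin n} : x ∈ residueClass n r a ↔ (x : ℕ) % r = a := by
  simp [residueClass]

section Blowups

variable {β C : Type} [Fintype β] {F : SimpleGraph β}

theorem hasRainbowCopy_turanGraph {n r : ℕ} (hF : F.Colorable r)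
    (hn : Fintype.card β + Fintype.card β ^ 3 < n / r) {c : Fin n → Fin n → C}
    (hc : ProperEdgeColoring (turanGraph n r) c) : HasRainbowCopy (turanGraph n r) c F := by
  obtain ⟨χ⟩ := hF
  refine hasRainbowCopy_of_coloring hc χ (fun a => residueClass n r a)
    (fun a => hn.trans_le (div_le_card_residueClass a.isLt)) fun a b hab x hx y hy _ => ?_
  rw [turanGraph_adj, mem_residueClass.mp hx, mem_residueClass.mp hy]
  exact Fin.val_ne_of_ne hab

theorem hasRainbowCopy_completeMultipartite {r : ℕ} {m : Fin r → ℕ} (hF : F.Colorable r)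
    (hm : ∀ i, Fintype.card β + Fintype.card β ^ 3 < m i)
    {c : (Σ i, Fin (m i)) → (Σ i, Fin (m i)) → C}
    (hc : ProperEdgeColoring (completeMultipartite m) c) :
    HasRainbowCopy (completeMultipartite m) c F := by
  obtain ⟨χ⟩ := hF
  refine hasRainbowCopy_of_coloring hc χ (fun a => univ.map (Function.Embedding.sigmaMk a))
    (fun a => by simpa using hm a) fun a b hab x hx y hy _ => ?_
  obtain ⟨x, -, rfl⟩ := mem_map.mp hx
  obtain ⟨y, -, rfl⟩ := mem_map.mp hy
  simpa [completeMultipartite] using hab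

end Blowups

lemma turanPlusEdge_adj_of_mod_ne {n r : ℕ} {x y : Fin n} (h : (x : ℕ) % r ≠ y % r) :
    (turanPlusEdge n r).Adj x y :=
  (fromRel_adj _ _ _).mpr ⟨fun hxy => h (by rw [hxy]), Or.inl (Or.inl h)⟩

lemma turanPlusEdge_adj_extra {n r : ℕ} (hr : 2 ≤ r) (hn : 2 * r ≤ n) :
    (turanPlusEdge n r).Adj ⟨r - 1, by omega⟩ ⟨2 * r - 1, by omega⟩ :=
  (fromRel_adj _ _ _).mpr ⟨by simp only [ne_eq, Fin.mk.injEq]; omega, Or.inl (Or.inr ⟨rfl, rfl⟩)⟩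

lemma colorable_pred_of_chromaticNumber_lt {β : Type} {F : SimpleGraph β} {k : ℕ} (hk : 0 < k)
    (h : F.chromaticNumber < k) : F.Colorable (k - 1) := by
  refine chromaticNumber_le_iff_colorable.mp (Order.le_of_lt_add_one ?_)
  rwa [← Nat.cast_add_one, Nat.sub_add_cancel hk]

lemma not_colorable_pred_of_chromaticNumber_eq {β : Type} {F : SimpleGraph β} {k : ℕ}
    (hk : 0 < k) (h : F.chromaticNumber = k) : ¬ F.Colorable (k - 1) := fun hF => by
  have := chromaticNumber_le_iff_colorable.mpr hF
  rw [h, Nat.cast_le] at this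
  omega

lemma exists_coloring_deleteEdges_eq {β : Type} {F : SimpleGraph β} {r : ℕ} {u v : β}
    (hF : ¬ F.Colorable r) (hFe : (F.deleteEdges {s(u, v)}).Colorable r) (a : Fin r) :
    ∃ χ : (F.deleteEdges {s(u, v)}).Coloring (Fin r), χ u = a ∧ χ v = a := by
  obtain ⟨χ₀⟩ := hFe
  have huv : χ₀ u = χ₀ v := by
    by_contra hne
    refine hF ⟨Coloring.mk χ₀ fun {x y} hxy => ?_⟩
    by_cases he : s(x, y) = s(u, v)
    · rcases Sym2.eq_iff.mp he with ⟨rfl, rfl⟩ | ⟨rfl, rfl⟩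
      exacts [hne, Ne.symm hne]
    · exact χ₀.valid (deleteEdges_adj.mpr ⟨hxy, he⟩)
  refine ⟨recolorOfEquiv _ (Equiv.swap (χ₀ u) a) χ₀, ?_, ?_⟩ <;>
    simp [← huv]

theorem hasRainbowCopy_turanPlusEdge {β C : Type} [Fintype β]
    {F : SimpleGraph β} {n r : ℕ} (hr : 2 ≤ r) {u v : β} (huv : F.Adj u v)
    (χ : (F.deleteEdges {s(u, v)}).Coloring (Fin r)) (hχu : (χ u : ℕ) = r - 1)
    (hχv : (χ v : ℕ) = r - 1) (hn : Fintype.card β + Fintype.card β ^ 3 < n / r)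
    {c : Fin n → Fin n → C} (hc : ProperEdgeColoring (turanPlusEdge n r) c) :
    HasRainbowCopy (turanPlusEdge n r) c F := by
  have hn2 : 2 * r ≤ n := by
    have : 0 < Fintype.card β := Fintype.card_pos_iff.mpr ⟨u⟩
    have : 1 ≤ Fintype.card β ^ 3 := Nat.one_le_pow _ _ this
    have := (Nat.le_div_iff_mul_le (by omega)).mp (show 2 ≤ n / r by omega)
    omega
  refine hasRainbowCopy_of_coloring_deleteEdge hc huv χ (fun a => residueClass n r a)
    (fun a => hn.trans_le (div_le_card_residueClass a.isLt))
    (fun a b hab x hx y hy _ => turanPlusEdge_adj_of_mod_ne ?_) ?_ ?_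
    (turanPlusEdge_adj_extra hr hn2)
  · rw [mem_residueClass.mp hx, mem_residueClass.mp hy]
    exact Fin.val_ne_of_ne hab
  · rw [mem_residueClass, hχu]
    exact Nat.mod_eq_of_lt (show r - 1 < r by omega)
  · rw [mem_residueClass, hχv]
    show (2 * r - 1) % r = r - 1
    rw [show 2 * r - 1 = r - 1 + 1 * r by omega, Nat.add_mul_mod_self_right]
    exact Nat.mod_eq_of_lt (show r - 1 < r by omega)

section Copies

variable {α β γ C : Type}

lemma containsCopy_of_iso {G : SimpleGraph α} {H : SimpleGraph β} (e : G ≃g H) :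
    ContainsCopy H G :=
  ⟨e, e.injective, fun _ _ h => e.map_adj_iff.mpr h⟩

lemma containsCopy_of_le {G H : SimpleGraph α} (h : H ≤ G) : ContainsCopy G H :=
  ⟨id, Function.injective_id, fun _ _ h' => h h'⟩

lemma ContainsCopy.trans {G : SimpleGraph α} {H : SimpleGraph β} {K : SimpleGraph γ}
    (hGH : ContainsCopy G H) (hHK : ContainsCopy H K) : ContainsCopy G K := by
  obtain ⟨g, hg, hgadj⟩ := hGH
  obtain ⟨f, hf, hfadj⟩ := hHK
  exact ⟨g ∘ f, hg.comp hf, fun _ _ h => hgadj (hfadj h)⟩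

lemma not_containsCopy_completeMultipartite {F : SimpleGraph β} {r : ℕ} (m : Fin r → ℕ)
    (hF : ¬ F.Colorable r) : ¬ ContainsCopy (completeMultipartite m) F := by
  rintro ⟨f, -, hf⟩
  exact hF ⟨Coloring.mk (fun w => (f w).1) fun h => by simpa [completeMultipartite] using hf h⟩

lemma ProperEdgeColoring.comap {G : SimpleGraph α} {H : SimpleGraph γ} {c : α → α → C}
    (hc : ProperEdgeColoring G c) {g : γ → α} (hg : Function.Injective g)
    (hgadj : ∀ ⦃x y⦄, H.Adj x y → G.Adj (g x) (g y)) :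
    ProperEdgeColoring H fun x y => c (g x) (g y) :=
  ⟨fun _ _ => hc.1 _ _, fun _ _ _ hxy hxz hyz =>
    hc.2 _ _ _ (hgadj hxy) (hgadj hxz) (hg.ne hyz)⟩

lemma HasRainbowCopy.map {G : SimpleGraph α} {H : SimpleGraph γ} {F : SimpleGraph β}
    {c : α → α → C} {g : γ → α} (hg : Function.Injective g)
    (hgadj : ∀ ⦃x y⦄, H.Adj x y → G.Adj (g x) (g y))
    (h : HasRainbowCopy H (fun x y => c (g x) (g y)) F) : HasRainbowCopy G c F := by
  obtain ⟨f, hf, hfadj, hrain⟩ := h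
  exact ⟨g ∘ f, hg.comp hf, fun _ _ h => hgadj (hfadj h), hrain⟩

end Copies

section Family

variable {nF : ℕ} {F : SimpleGraph (Fin nF)}

lemma rainbowFreeFam.not_containsCopy {γ : Type} {H : SimpleGraph γ}
    (hH : ∀ {C : Type} (c : γ → γ → C), ProperEdgeColoring H c → HasRainbowCopy H c F)
    {n : ℕ} {G : SimpleGraph (Fin n)} (hG : rainbowFreeFam F n G) : ¬ ContainsCopy G H := by
  rintro ⟨g, hg, hgadj⟩
  obtain ⟨C, c, hc, hno⟩ := hG
  exact hno ((hH _ (hc.comap hg hgadj)).map hg hgadj)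

lemma rainbowFreeFam_of_not_containsCopy {n : ℕ} {G : SimpleGraph (Fin n)}
    (h : ¬ ContainsCopy G F) : rainbowFreeFam F n G := by
  -- with every edge coloured by itself, a rainbow copy is just a copy
  refine ⟨Sym2 (Fin n), fun x y => s(x, y), ⟨fun _ _ => Sym2.eq_swap, ?_⟩, ?_⟩
  · exact fun _ _ _ _ _ hyz h => hyz (Sym2.congr_right.mp h)
  · exact fun ⟨f, hf, hfadj, _⟩ => h ⟨f, hf, hfadj⟩

lemma memFam_rainbowFreeFam_of_not_containsCopy {γ : Type} [Fintype γ] {H : SimpleGraph γ}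
    (h : ¬ ContainsCopy H F) : MemFam (rainbowFreeFam F) H := by
  let e : Fin (Fintype.card γ) ≃ γ := (Fintype.equivFin γ).symm
  let iso : H.comap e.toEmbedding ≃g H := Iso.comap e H
  exact ⟨_, _, ⟨iso.symm⟩,
    rainbowFreeFam_of_not_containsCopy fun h' => h ((containsCopy_of_iso iso).trans h')⟩

end Family

/-- Let `F` have chromatic number `k ≥ 3` and a color-critical edge,
and let `𝓐` be the family of graphs admitting a proper edge-coloring with no rainbow
copy of `F`. Then `(𝓐, 𝓐ᶜ)` is an edge-critical partition: it is suitable with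
abstract chromatic number `k`, and for all sufficiently large `n` no graph in `𝓐`
contains `T⁺(n, k-1)` as a subgraph. -/
theorem rainbowFreeFam_edgeCritical (k nF : ℕ) (hk : 3 ≤ k)
    (F : SimpleGraph (Fin nF)) (hchi : F.chromaticNumber = (k : ℕ∞))
    (hcrit : ∃ u v : Fin nF, F.Adj u v ∧
      (F.deleteEdges {s(u, v)}).chromaticNumber < (k : ℕ∞)) :
    EdgeCritical (rainbowFreeFam F) k := by
  obtain ⟨u, v, huv, hlt⟩ := hcrit
  have hF : F.Colorable k := chromaticNumber_le_iff_colorable.mp hchi.le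
  have hF' : ¬ F.Colorable (k - 1) := not_colorable_pred_of_chromaticNumber_eq (by omega) hchi
  obtain ⟨χ, hχu, hχv⟩ := exists_coloring_deleteEdges_eq hF'
    (colorable_pred_of_chromaticNumber_lt (by omega) hlt) ⟨k - 2, by omega⟩
  have hlarge : ∀ n, k * (nF + nF ^ 3 + 1) ≤ n → nF + nF ^ 3 < n / k := fun n hn =>
    (Nat.le_div_iff_mul_le (by omega)).mpr (by linarith)
  have hTuran : ∀ n, k * (nF + nF ^ 3 + 1) ≤ n → ∀ n' (G : SimpleGraph (Fin n')),
      rainbowFreeFam F n' G → ¬ ContainsCopy G (turanGraph n k) := fun n hn _ _ hG =>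
    hG.not_containsCopy fun _ hc =>
      hasRainbowCopy_turanGraph hF (by simpa using hlarge n hn) hc
  have hMem : ∀ m : Fin (k - 1) → ℕ, MemFam (rainbowFreeFam F) (completeMultipartite m) :=
    fun m => memFam_rainbowFreeFam_of_not_containsCopy (not_containsCopy_completeMultipartite m hF')
  refine ⟨Or.inr ⟨k, by omega, _, fun n hn => ⟨fun m _ => hMem m, hTuran n hn⟩⟩,
    ⟨?_, ⟨0, fun m _ => hMem m⟩, ?_⟩, k * (nF + nF ^ 3 + 1), fun n hn _ _ hG => ?_⟩
  · rintro ⟨N, hN⟩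
    let n := max N (k * (nF + nF ^ 3 + 1))
    exact hTuran n (le_max_right _ _) n ⊤ (hN n (le_max_left _ _)) (containsCopy_of_le le_top)
  · rintro j hj ⟨N, hN⟩
    obtain ⟨n, H, ⟨e⟩, hH⟩ := hN (fun _ => N + nF + nF ^ 3 + 1) fun _ => by omega
    exact hH.not_containsCopy (fun _ hc => hasRainbowCopy_completeMultipartite (hF.mono hj)
      (fun _ => by simp only [Fintype.card_fin]; omega) hc) (containsCopy_of_iso e)
  · refine hG.not_containsCopy fun _ hc => hasRainbowCopy_turanPlusEdge (by omega) huv χ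
      (by simp [hχu]; omega) (by simp [hχv]; omega) ?_ hc
    simpa using (hlarge n hn).trans_le (Nat.div_le_div_left (by omega) (by omega))
end
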